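/- arXiv:1603.09734 — 4 statements merged into one kernel-verified Lean document; each statement's English description precedes it below -/
import Mathlib

section
/- Let A, B, C ∈ ℂ and let x₁, y₁, z₁ ∈ ℂ with x₁ ≠ 0 and y₁ ≠ 0. Set x₀ = x₁/(16 y₁), y₀ = −x₁/(16 y₁²), z₀ = x₁ z₁/(256 y₁⁴). Then z₁² = x₁(x₁² + (20A y₁² − 20B y₁ + C) x₁ + 16 y₁⁵) holds if and only if z₀² = x₀³ − 4 y₀²(4 y₀ − 5A) x₀² + 20B y₀³ x₀ + C y₀⁴ holds. (Thus the two affine equations define birationally equivalent surfaces.) -/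
/-! The substitution is a weighted rescaling: it multiplies the right-hand side of the equation
of `S(A:B:C)` by `(x₁ / (256 y₁⁴))²`, which is exactly the factor by which it multiplies `z²`.
Away from `x₁ y₁ = 0` this factor is a unit, so the two equations are equivalent. -/

section K3Models

variable {K : Type*} [Field K]

def k3Rhs (A B C x y : K) : K :=
  x ^ 3 - 4 * y ^ 2 * (4 * y - 5 * A) * x ^ 2 + 20 * B * y ^ 3 * x + C * y ^ 4

def altRhs (A B C x y : K) : K :=
  x * (x ^ 2 + (20 * A * y ^ 2 - 20 * B * y + C) * x + 16 * y ^ 5)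

theorem k3Rhs_div_eq_sq_mul_altRhs (A B C x y : K) :
    k3Rhs A B C (x / (16 * y)) (-(x / (16 * y ^ 2))) = (x / (256 * y ^ 4)) ^ 2 * altRhs A B C x y := by
  unfold k3Rhs altRhs
  by_cases h : (16 : K) * y = 0
  · -- every denominator is a multiple of `16 y`, so both sides are junk `0`
    have h₂ : (16 : K) * y ^ 2 = 0 := by linear_combination y * h
    have h₄ : (256 : K) * y ^ 4 = 0 := by linear_combination 16 * y ^ 3 * h
    simp [h, h₂, h₄]
  · have h16 : (16 : K) ≠ 0 := left_ne_zero_of_mul h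
    have h256 : (256 : K) ≠ 0 := by
      rw [show (256 : K) = 16 * 16 by norm_num]
      exact mul_ne_zero h16 h16
    have hy : y ≠ 0 := right_ne_zero_of_mul h
    field_simp
    ring

end K3Models

/-- The defining equation of the K3 surface `S(A:B:C)` is birationally equivalent to the
alternative model `z₁² = x₁(x₁² + (20A y₁² − 20B y₁ + C)x₁ + 16 y₁⁵)`. -/
theorem stmt_0 (A B C : ℂ) (x₁ y₁ z₁ : ℂ) (hx₁ : x₁ ≠ 0) (hy₁ : y₁ ≠ 0)
    (x₀ y₀ z₀ : ℂ)
    (hx₀ : x₀ = x₁ / (16 * y₁))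
    (hy₀ : y₀ = -(x₁ / (16 * y₁ ^ 2)))
    (hz₀ : z₀ = x₁ * z₁ / (256 * y₁ ^ 4)) :
    z₁ ^ 2 = x₁ * (x₁ ^ 2 + (20 * A * y₁ ^ 2 - 20 * B * y₁ + C) * x₁ + 16 * y₁ ^ 5) ↔
      z₀ ^ 2 = x₀ ^ 3 - 4 * y₀ ^ 2 * (4 * y₀ - 5 * A) * x₀ ^ 2
        + 20 * B * y₀ ^ 3 * x₀ + C * y₀ ^ 4 := by
  subst hx₀ hy₀ hz₀
  have hz : (x₁ * z₁ / (256 * y₁ ^ 4)) ^ 2 = (x₁ / (256 * y₁ ^ 4)) ^ 2 * z₁ ^ 2 := by ring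
  have hunit : (x₁ / (256 * y₁ ^ 4)) ^ 2 ≠ 0 := by simp [hx₁, hy₁]
  change _ ↔ _ = k3Rhs A B C _ _
  rw [hz, k3Rhs_div_eq_sq_mul_altRhs]
  exact (mul_right_inj' hunit).symm
end

section
/- Let A, B, C ∈ ℂ. Suppose (x₁, y₁, z₁) and (x₁', y₁, z₁') both satisfy z² = x(x² + (20A y₁² − 20B y₁ + C)x + 16 y₁⁵) with x₁, x₁', z₁, z₁' all nonzero, and suppose they have the same invariants: x₁ + 16 y₁⁵/x₁ = x₁' + 16 y₁⁵/x₁' and (x₁² − 16 y₁⁵)/z₁ = (x₁'² − 16 y₁⁵)/z₁'. Then either (x₁', z₁') = (x₁, z₁) or (x₁', z₁') = (16 y₁⁵/x₁, −16 y₁⁵ z₁/x₁²). In other words, the map (x₁, y₁, z₁) ↦ (u₁, y₁, v₁) is two-to-one, its fibres being the orbits of the involution ι. -/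
/-- The map `(x₁, y₁, z₁) ↦ (u₁, y₁, v₁)` is two-to-one: two points of the surface with the
same invariants `u₁ = x₁ + 16y₁⁵/x₁` and `v₁ = (x₁² − 16y₁⁵)/z₁` are equal or interchanged
by the involution `ι`. -/
theorem stmt_4 (A B C : ℂ) (x₁ y₁ z₁ x₁' z₁' : ℂ)
    (hx₁ : x₁ ≠ 0) (hz₁ : z₁ ≠ 0) (hx₁' : x₁' ≠ 0) (hz₁' : z₁' ≠ 0)
    (h : z₁ ^ 2 = x₁ * (x₁ ^ 2 + (20 * A * y₁ ^ 2 - 20 * B * y₁ + C) * x₁ + 16 * y₁ ^ 5))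
    (h' : z₁' ^ 2 = x₁' * (x₁' ^ 2 + (20 * A * y₁ ^ 2 - 20 * B * y₁ + C) * x₁' + 16 * y₁ ^ 5))
    (hu : x₁ + 16 * y₁ ^ 5 / x₁ = x₁' + 16 * y₁ ^ 5 / x₁')
    (hv : (x₁ ^ 2 - 16 * y₁ ^ 5) / z₁ = (x₁' ^ 2 - 16 * y₁ ^ 5) / z₁') :
    (x₁' = x₁ ∧ z₁' = z₁) ∨
      (x₁' = 16 * y₁ ^ 5 / x₁ ∧ z₁' = -(16 * y₁ ^ 5 * z₁) / x₁ ^ 2) := by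
  have hu0 : x₁ * x₁ * x₁' + 16 * y₁ ^ 5 * x₁' = x₁' * x₁' * x₁ + 16 * y₁ ^ 5 * x₁ := by
    field_simp at hu
    linear_combination hu
  have hu' : (x₁ - x₁') * (x₁ * x₁' - 16 * y₁ ^ 5) = 0 := by linear_combination hu0
  have hv' : (x₁ ^ 2 - 16 * y₁ ^ 5) * z₁' = (x₁' ^ 2 - 16 * y₁ ^ 5) * z₁ := by
    field_simp at hv
    linear_combination hv
  -- the degenerate case x₁² = 16 y₁⁵ and x₁' = x₁, handled in both branches
  have deg : x₁' = x₁ → x₁ ^ 2 = 16 * y₁ ^ 5 →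
      (x₁' = x₁ ∧ z₁' = z₁) ∨
        (x₁' = 16 * y₁ ^ 5 / x₁ ∧ z₁' = -(16 * y₁ ^ 5 * z₁) / x₁ ^ 2) := by
    intro hx hs
    have hzz : (z₁' - z₁) * (z₁' + z₁) = 0 := by
      rw [hx] at h'
      linear_combination h' - h
    rcases mul_eq_zero.1 hzz with h1 | h1
    · exact Or.inl ⟨hx, sub_eq_zero.mp h1⟩
    · right
      have hz : z₁' = -z₁ := by linear_combination h1
      constructor
      · rw [hx, ← hs]; field_simp [sq]
      · rw [hz, ← hs]; field_simp
  rcases mul_eq_zero.1 hu' with h1 | h2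
  · have hx : x₁' = x₁ := (sub_eq_zero.mp h1).symm
    by_cases hs : x₁ ^ 2 = 16 * y₁ ^ 5
    · exact deg hx hs
    · left
      refine ⟨hx, ?_⟩
      have : (x₁ ^ 2 - 16 * y₁ ^ 5) * z₁' = (x₁ ^ 2 - 16 * y₁ ^ 5) * z₁ := by
        rw [hv', hx]
      exact mul_left_cancel₀ (sub_ne_zero.mpr hs) this
  · have hxx : x₁ * x₁' = 16 * y₁ ^ 5 := sub_eq_zero.mp h2
    by_cases hs : x₁ ^ 2 = 16 * y₁ ^ 5
    · have hx : x₁' = x₁ := by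
        have : x₁ * x₁' = x₁ * x₁ := by rw [hxx, ← hs]; ring
        exact mul_left_cancel₀ hx₁ this
      exact deg hx hs
    · right
      have hx' : x₁' = 16 * y₁ ^ 5 / x₁ := by
        field_simp
        linear_combination hxx
      refine ⟨hx', ?_⟩
      have key : (x₁ ^ 2 - 16 * y₁ ^ 5) * (x₁ ^ 2 * z₁') =
          (x₁ ^ 2 - 16 * y₁ ^ 5) * (-(16 * y₁ ^ 5 * z₁)) := by
        linear_combination x₁ ^ 2 * hv' + z₁ * (x₁ * x₁' + 16 * y₁ ^ 5) * h2
      have hz : x₁ ^ 2 * z₁' = -(16 * y₁ ^ 5 * z₁) := mul_left_cancel₀ (sub_ne_zero.mpr hs) key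
      field_simp
      linear_combination hz
end

section
/- Let A, B, C ∈ ℂ and let (x₁, y₁, z₁) ∈ ℂ³ with x₁ ≠ 0 and z₁ ≠ 0 satisfy z₁² = x₁(x₁² + (20A y₁² − 20B y₁ + C) x₁ + 16 y₁⁵). Define y = 2 y₁, u = −(x₁ + 16 y₁⁵/x₁), and v = −i·(u − (5A y² − 10B y + C))·(x₁² − 16 y₁⁵)/z₁, where i = √(−1). Then v² = (u² − 2 y⁵)(u − (5A y² − 10B y + C)). (This is the defining equation of the Kummer surface K(A:B:C) obtained as the quotient of S(A:B:C) by the symplectic involution ι.) -/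
/-!
With `w = 5Ay² − 10By + C = 20Ay₁² − 20By₁ + C`, the two factors of the Kummer equation become
squares up to sign on `S(A:B:C)`: `u² − 2y⁵ = ((x₁² − 16y₁⁵)/x₁)²` is an identity, and the surface
equation says exactly `u − w = −(z₁/x₁)²`. Since `v = −i (u − w)(x₁² − 16y₁⁵)/z₁`, squaring gives
`v² = −(u − w)² ((x₁² − 16y₁⁵)/z₁)² = (u − w)((x₁² − 16y₁⁵)/x₁)²`.
-/

section Kummer

variable {K : Type*} [Field K]

theorem sq_add_div_sub_eq_sq_sub_div (x t : K) (hx : x ≠ 0) :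
    (x + t / x) ^ 2 - 4 * t = ((x ^ 2 - t) / x) ^ 2 := by
  field_simp
  ring

theorem neg_add_div_sub_eq_neg_div_sq {x c t z : K} (hx : x ≠ 0)
    (h : z ^ 2 = x * (x ^ 2 + c * x + t)) :
    -(x + t / x) - c = -(z / x) ^ 2 := by
  rw [div_pow, h]
  field_simp
  ring

end Kummer

/-- The `G`-invariant coordinates on `S(A:B:C)` satisfy the defining equation
`v² = (u² − 2y⁵)(u − (5Ay² − 10By + C))` of the Kummer surface `K(A:B:C)`. -/
theorem stmt_5 (A B C : ℂ) (x₁ y₁ z₁ : ℂ) (hx₁ : x₁ ≠ 0) (hz₁ : z₁ ≠ 0)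
    (h : z₁ ^ 2 = x₁ * (x₁ ^ 2 + (20 * A * y₁ ^ 2 - 20 * B * y₁ + C) * x₁ + 16 * y₁ ^ 5))
    (y u v : ℂ)
    (hy : y = 2 * y₁)
    (hu : u = -(x₁ + 16 * y₁ ^ 5 / x₁))
    (hv : v = -Complex.I * (u - (5 * A * y ^ 2 - 10 * B * y + C)) *
      ((x₁ ^ 2 - 16 * y₁ ^ 5) / z₁)) :
    v ^ 2 = (u ^ 2 - 2 * y ^ 5) * (u - (5 * A * y ^ 2 - 10 * B * y + C)) := by
  have hw : 5 * A * y ^ 2 - 10 * B * y + C = 20 * A * y₁ ^ 2 - 20 * B * y₁ + C := by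
    rw [hy]; ring
  have hfactor : u - (5 * A * y ^ 2 - 10 * B * y + C) = -(z₁ / x₁) ^ 2 := by
    rw [hw, hu]
    exact neg_add_div_sub_eq_neg_div_sq hx₁ h
  have hsquare : u ^ 2 - 2 * y ^ 5 = ((x₁ ^ 2 - 16 * y₁ ^ 5) / x₁) ^ 2 := by
    rw [hu, hy, neg_sq, ← sq_add_div_sub_eq_sq_sub_div x₁ _ hx₁]
    ring
  rw [hv, hfactor, hsquare, mul_pow, mul_pow, neg_sq, Complex.I_sq]
  field_simp
end

section
/- Let F be a field and let W be the Weierstrass curve y² = x³ + a x² + b x over F (i.e. Weierstrass coefficients a₁ = a₃ = a₆ = 0, a₂ = a, a₄ = b) with nonzero discriminant. Then T = (0, 0) is an affine point of W, and for every affine point P = (x₀, y₀) of W with x₀ ≠ 0, the group-law sum T + P is the affine point (b/x₀, −b y₀/x₀²). (This shows the involution ι(x, z) = (16y⁵/x, −16y⁵z/x²) on the fibres of the elliptic fibration is translation by the 2-torsion section, i.e. a van Geemen–Sarti involution, with b = 16y⁵.) -/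
/-!
The chord through `T = (0, 0)` and `P = (x₀, y₀)` is `y = ℓx` with `ℓ = y₀ / x₀`; substituting
into `y² = x³ + ax² + bx` gives `x (x² + (a - ℓ²) x + b) = 0`, so the third intersection point
has `x`-coordinate `b / x₀` (the two nonzero roots multiply to `b`), and its `y`-coordinate
`ℓ b / x₀` is negated by the group law. The discriminant `16 b² (a² - 4b)` forces `b ≠ 0`,
which is exactly the nonsingularity of `T`.
-/

open WeierstrassCurve

namespace WeierstrassCurve.Affine

variable {F : Type*} [Field F] {W : Affine F}

lemma Δ_of_a₁_a₃_a₆ (h₁ : W.a₁ = 0) (h₃ : W.a₃ = 0) (h₆ : W.a₆ = 0) :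
    W.Δ = 16 * W.a₄ ^ 2 * (W.a₂ ^ 2 - 4 * W.a₄) := by
  simp only [Δ, b₂, b₄, b₆, b₈, h₁, h₃, h₆]
  ring

variable [DecidableEq F]

lemma slope_zero_zero {x y : F} (hx : x ≠ 0) : W.slope 0 x 0 y = y / x := by
  rw [slope_of_X_ne hx.symm, zero_sub, zero_sub, neg_div_neg_eq]

lemma addX_zero_zero (h₁ : W.a₁ = 0) (h₃ : W.a₃ = 0) (h₆ : W.a₆ = 0) {x y : F}
    (hx : x ≠ 0) (h : W.Equation x y) :
    W.addX 0 x (W.slope 0 x 0 y) = W.a₄ / x := by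
  rw [equation_iff, h₁, h₃, h₆] at h
  rw [slope_zero_zero hx, addX, h₁]
  field_simp
  linear_combination h

lemma addY_zero_zero (h₁ : W.a₁ = 0) (h₃ : W.a₃ = 0) (h₆ : W.a₆ = 0) {x y : F}
    (hx : x ≠ 0) (h : W.Equation x y) :
    W.addY 0 x 0 (W.slope 0 x 0 y) = -W.a₄ * y / x ^ 2 := by
  rw [addY, negY, negAddY, addX_zero_zero h₁ h₃ h₆ hx h, slope_zero_zero hx, h₁, h₃]
  field_simp
  ring

lemma Point.some_zero_zero_add_some (h₁ : W.a₁ = 0) (h₃ : W.a₃ = 0) (h₆ : W.a₆ = 0)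
    {x y : F} (hx : x ≠ 0) (h₀ : W.Nonsingular 0 0) (h : W.Nonsingular x y) :
    ∃ h' : W.Nonsingular (W.a₄ / x) (-W.a₄ * y / x ^ 2),
      Point.some _ _ h₀ + Point.some _ _ h = Point.some _ _ h' := by
  have hsum := Point.add_of_X_ne (h₁ := h₀) (h₂ := h) hx.symm
  simp only [addX_zero_zero h₁ h₃ h₆ hx h.1, addY_zero_zero h₁ h₃ h₆ hx h.1] at hsum
  exact ⟨_, hsum⟩

end WeierstrassCurve.Affine

open Classical in
/-- On the Weierstrass curve `y² = x³ + ax² + bx` with nonzero discriminant, `T = (0, 0)` is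
an affine point, and for any affine point `P = (x₀, y₀)` with `x₀ ≠ 0`, the group-law sum
`T + P` is the affine point `(b/x₀, −by₀/x₀²)`. -/
theorem stmt_6 {F : Type*} [Field F] (a b : F)
    (W : WeierstrassCurve.Affine F)
    (hW : W = { a₁ := 0, a₂ := a, a₃ := 0, a₄ := b, a₆ := 0 })
    (hΔ : W.Δ ≠ 0)
    (x₀ y₀ : F) (hx₀ : x₀ ≠ 0) (hP : W.Nonsingular x₀ y₀) :
    ∃ (hT : W.Nonsingular 0 0) (hQ : W.Nonsingular (b / x₀) (-b * y₀ / x₀ ^ 2)),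
      Affine.Point.some _ _ hT + Affine.Point.some _ _ hP = Affine.Point.some _ _ hQ := by
  have h₁ : W.a₁ = 0 := by rw [hW]
  have h₃ : W.a₃ = 0 := by rw [hW]
  have h₆ : W.a₆ = 0 := by rw [hW]
  have h₄ : W.a₄ = b := by rw [hW]
  subst h₄
  have hb : W.a₄ ≠ 0 := by
    intro hb
    apply hΔ
    rw [Affine.Δ_of_a₁_a₃_a₆ h₁ h₃ h₆, hb]
    ring
  have hT : W.Nonsingular 0 0 := Affine.nonsingular_zero.mpr ⟨h₆, Or.inr hb⟩
  exact ⟨hT, Affine.Point.some_zero_zero_add_some h₁ h₃ h₆ hx₀ hT hP⟩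
end
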